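/- Let n ≥ 3 be an integer, let D be a division ring whose characteristic is either 0 or greater than n, and let R = M_m(D) with m ≥ 2. If f, g : R → R are additive maps satisfying f(X) + X^n · g(X⁻¹) = 0 for every invertible X ∈ R, then f(αI) = 0 and g(αI) = 0 for every α ∈ D, where I is the identity matrix and αI the corresponding scalar matrix. -/

import Mathlib

open Matrix

section Helpers

variable {m : ℕ} {D : Type*} [DivisionRing D]

private lemma smul_one_mul' (a : D) (M : Matrix (Fin m) (Fin m) D) :
    (a • (1 : Matrix (Fin m) (Fin m) D)) * M = a • M := by
  rw [Matrix.smul_mul, one_mul]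

private lemma mul_smul_central {d : D} (hd : ∀ x : D, d * x = x * d)
    (M N : Matrix (Fin m) (Fin m) D) : M * (d • N) = d • (M * N) := by
  ext a b
  simp only [Matrix.mul_apply, Matrix.smul_apply, smul_eq_mul, Finset.mul_sum]
  refine Finset.sum_congr rfl fun k _ => ?_
  rw [← mul_assoc, ← hd, mul_assoc]

private lemma smul_one_pow' (a : D) :
    ∀ r : ℕ, (a • (1 : Matrix (Fin m) (Fin m) D)) ^ r = a ^ r • 1
  | 0 => by simp
  | (r+1) => by
      rw [pow_succ, smul_one_pow' a r, smul_one_mul', smul_smul, ← pow_succ]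

private lemma std_mul_smul_one (i j : Fin m) (a b : D) :
    single i j a * (b • (1 : Matrix (Fin m) (Fin m) D)) =
      single i j (a * b) := by
  rw [smul_one_eq_diagonal]
  ext x y
  rw [Matrix.mul_diagonal]
  simp only [single, of_apply, ite_mul, zero_mul]

private lemma smul_cancel' {c : D} (hc : c ≠ 0) {M : Matrix (Fin m) (Fin m) D}
    (hM : c • M = 0) : M = 0 := by
  have := congrArg (fun N => c⁻¹ • N) hM
  simpa [smul_smul, inv_mul_cancel₀ hc] using this





/-- coefficient sequence in the expansion of `(α•1 + t·E)^r`. -/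
private def cseq (α t : D) : ℕ → D
  | 0 => 0
  | (r+1) => α ^ r * t + cseq α t r * α

private lemma key_pow {i j : Fin m} (hij : i ≠ j) (α t : D) :
    ∀ r : ℕ, (α • (1 : Matrix (Fin m) (Fin m) D) + single i j t) ^ r
      = α ^ r • 1 + single i j (cseq α t r)
  | 0 => by simp [cseq]
  | (r+1) => by
      rw [pow_succ, key_pow hij α t r, add_mul, mul_add, mul_add,
        show (α ^ r • (1 : Matrix (Fin m) (Fin m) D)) * (α • 1) = α ^ r • (α • 1) from
          smul_one_mul' _ _,
        smul_smul, ← pow_succ, smul_one_mul', smul_single, smul_eq_mul,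
        std_mul_smul_one, Matrix.single_mul_single_of_ne (h := hij.symm), add_zero,
        show cseq α t (r+1) = α ^ r * t + cseq α t r * α from rfl,
        single_add]
      abel

private lemma mul_eq_one_aux {i j : Fin m} (hij : i ≠ j) {α β t s : D} (hαβ : α * β = 1)
    (hts : α * s + t * β = 0) :
    (α • (1 : Matrix (Fin m) (Fin m) D) + single i j t) *
      (β • 1 + single i j s) = 1 := by
  rw [add_mul, mul_add, mul_add, smul_one_mul', smul_smul, hαβ, one_smul,
    smul_one_mul', smul_single, smul_eq_mul, std_mul_smul_one,
    Matrix.single_mul_single_of_ne (h := hij.symm), add_zero, add_assoc,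
    ← single_add, hts, single_zero, add_zero]

/-- the unit `α•1 + t·E_{ij}` for `α ≠ 0`, `i ≠ j`. -/
private def mkUnit {i j : Fin m} (hij : i ≠ j) {α : D} (hα : α ≠ 0) (t : D) :
    (Matrix (Fin m) (Fin m) D)ˣ where
  val := α • 1 + single i j t
  inv := α⁻¹ • 1 + single i j (-(α⁻¹ * t * α⁻¹))
  val_inv := mul_eq_one_aux hij (mul_inv_cancel₀ hα) (by
    rw [mul_neg, ← mul_assoc, ← mul_assoc, mul_inv_cancel₀ hα, one_mul, neg_add_cancel])
  inv_val := mul_eq_one_aux hij (inv_mul_cancel₀ hα) (by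
    rw [neg_mul, mul_assoc, inv_mul_cancel₀ hα, mul_one, add_neg_cancel])

private lemma eq_zero_of_std_mul (hm : 2 ≤ m) (M : Matrix (Fin m) (Fin m) D)
    (H : ∀ i j : Fin m, i ≠ j → single i j (1 : D) * M = 0) : M = 0 := by
  have h01 : (⟨0, by omega⟩ : Fin m) ≠ (⟨1, by omega⟩ : Fin m) := by
    simp [Fin.ext_iff]
  ext a b
  by_cases ha : a = ⟨0, by omega⟩
  · have := congrFun (congrFun (H ⟨1, by omega⟩ a (ha ▸ h01.symm)) ⟨1, by omega⟩) b
    simpa using this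
  · have := congrFun (congrFun (H ⟨0, by omega⟩ a (fun hc => ha hc.symm)) ⟨0, by omega⟩) b
    simpa using this

private lemma map_natCast_inv_smul
    (G : Matrix (Fin m) (Fin m) D →+ Matrix (Fin m) (Fin m) D)
    {k : ℕ} (hk : ((k : ℕ) : D) ≠ 0) (x : Matrix (Fin m) (Fin m) D) :
    G ((k : D)⁻¹ • x) = (k : D)⁻¹ • G x := by
  have h1 : G ((k : D) • ((k : D)⁻¹ • x)) = (k : D) • G ((k : D)⁻¹ • x) := by
    rw [Nat.cast_smul_eq_nsmul, map_nsmul, Nat.cast_smul_eq_nsmul]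
  rw [smul_inv_smul₀ hk] at h1
  exact ((inv_smul_eq_iff₀ hk).mpr h1).symm


section Part3

private lemma cseq_central {κ t : D} (hc : ∀ x : D, κ * x = x * κ) :
    ∀ r : ℕ, cseq κ t (r+1) = ((r+1 : ℕ) : D) * κ ^ r * t
  | 0 => by simp [cseq]
  | (r+1) => by
      rw [show cseq κ t (r+2) = κ ^ (r+1) * t + cseq κ t (r+1) * κ from rfl,
        cseq_central hc r,
        mul_assoc (((r+1:ℕ):D) * κ ^ r) t κ, ← hc t,
        ← mul_assoc (((r+1:ℕ):D) * κ ^ r) κ t,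
        mul_assoc ((r+1:ℕ):D) (κ ^ r) κ, ← pow_succ,
        show ((r+2:ℕ):D) = ((r+1:ℕ):D) + 1 from Nat.cast_add_one (r+1),
        add_mul, add_mul, one_mul, add_comm]

private lemma cseq_diag (α : D) : ∀ r : ℕ, cseq α α r = (r : D) * α ^ r
  | 0 => by simp [cseq]
  | (r+1) => by
      rw [show cseq α α (r+1) = α ^ r * α + cseq α α r * α from rfl, cseq_diag α r,
        ← pow_succ, mul_assoc, ← pow_succ,
        show ((r+1:ℕ):D) = (r:D) + 1 from Nat.cast_add_one r, add_mul, one_mul, add_comm]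

private lemma cast_ne_zero_of_char {n : ℕ} (hchar : ringChar D = 0 ∨ n < ringChar D)
    {k : ℕ} (h1 : 1 ≤ k) (h2 : k ≤ n) : ((k : ℕ) : D) ≠ 0 := by
  rcases hchar with h0 | hp
  · haveI := ringChar.of_eq h0
    haveI : CharZero D := CharP.charP_to_charZero D
    exact Nat.cast_ne_zero.mpr (by omega)
  · intro hzero
    have hd : ringChar D ∣ k := (ringChar.spec D k).mp hzero
    have := Nat.le_of_dvd (by omega) hd
    omega

private lemma exists_good_k {n : ℕ} (hn : 3 ≤ n)
    (hchar : ringChar D = 0 ∨ n < ringChar D) :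
    ∃ k : ℕ, ((k : ℕ) : D) ≠ 0 ∧ ((k : ℕ) : D) ^ (n - 2) ≠ 1 := by
  rcases hchar with h0 | hp
  · haveI := ringChar.of_eq h0
    haveI : CharZero D := CharP.charP_to_charZero D
    refine ⟨2, Nat.cast_ne_zero.mpr (by omega), ?_⟩
    intro hone
    have : ((2 ^ (n-2) : ℕ) : D) = ((1 : ℕ) : D) := by push_cast; simpa using hone
    have h2 : (2 : ℕ) ^ (n-2) = 1 := Nat.cast_injective this
    have : 2 ≤ 2 ^ (n - 2) := Nat.one_lt_two_pow_iff.mpr (by omega)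
    omega
  · set p := ringChar D with hpdef
    haveI hcp : CharP D p := ringChar.charP D
    have hprime : p.Prime := by
      rcases CharP.char_is_prime_or_zero D p with h | h
      · exact h
      · omega
    haveI : Fact p.Prime := ⟨hprime⟩
    by_contra hcon
    push_neg at hcon
    -- all k in [1,n] satisfy (k:D)^(n-2) = 1
    have hall : ∀ k : ℕ, 1 ≤ k → k ≤ n → ((k : ℕ) : ZMod p) ^ (n - 2) = 1 := by
      intro k hk1 hk2
      have hkD : ((k : ℕ) : D) ≠ 0 := cast_ne_zero_of_char (Or.inr hp) hk1 hk2
      have hD : ((k : ℕ) : D) ^ (n - 2) = 1 := hcon k hkD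
      have hinj : Function.Injective (ZMod.castHom (dvd_refl p) D) :=
        (ZMod.castHom (dvd_refl p) D).injective
      apply hinj
      rw [map_pow, map_natCast, _root_.map_one]
      exact hD
    -- counting in ZMod p
    have hsub : (Finset.Icc 1 n).image (fun k : ℕ => (k : ZMod p)) ⊆
        (Polynomial.nthRoots (n - 2) (1 : ZMod p)).toFinset := by
      intro x hx
      simp only [Finset.mem_image, Finset.mem_Icc] at hx
      obtain ⟨k, ⟨hk1, hk2⟩, rfl⟩ := hx
      rw [Multiset.mem_toFinset, Polynomial.mem_nthRoots (by omega : 0 < n - 2)]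
      exact hall k hk1 hk2
    have hcard : ((Finset.Icc 1 n).image (fun k : ℕ => (k : ZMod p))).card = n := by
      rw [Finset.card_image_of_injOn, Nat.card_Icc]
      · omega
      · intro a ha b hb hab
        simp only [Finset.coe_Icc, Set.mem_Icc] at ha hb
        have hap : a < p := by omega
        have hbp : b < p := by omega
        have := congrArg ZMod.val hab
        rwa [ZMod.val_natCast_of_lt hap, ZMod.val_natCast_of_lt hbp] at this
    have h1 := Finset.card_le_card hsub
    have h2 := Multiset.toFinset_card_le (Polynomial.nthRoots (n - 2) (1 : ZMod p))
    have h3 := Polynomial.card_nthRoots (n - 2) (1 : ZMod p)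
    omega

end Part3

section Part4

private lemma std_neg (i j : Fin m) (a : D) :
    single i j (-a) = - single i j a := by
  ext x y
  simp only [single, of_apply, Matrix.neg_apply]
  split_ifs <;> simp

private lemma pow_central {i j : Fin m} (hij : i ≠ j) {κ : D} (hc : ∀ x : D, κ * x = x * κ)
    (t : D) {n : ℕ} (hn : 1 ≤ n) :
    (κ • (1 : Matrix (Fin m) (Fin m) D) + single i j t) ^ n
      = κ ^ n • 1 + ((n : D) * κ ^ (n-1)) • single i j t := by
  obtain ⟨r, rfl⟩ : ∃ r, n = r + 1 := ⟨n - 1, by omega⟩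
  rw [key_pow hij, cseq_central hc r, Nat.add_sub_cancel, smul_single, smul_eq_mul]

private lemma pow_diag {i j : Fin m} (hij : i ≠ j) (α : D) (n : ℕ) :
    (α • (1 : Matrix (Fin m) (Fin m) D) + single i j α) ^ n
      = α ^ n • 1 + ((n : D) * α ^ n) • single i j 1 := by
  rw [key_pow hij, cseq_diag, smul_single, smul_eq_mul, mul_one]

end Part4

section Part5

variable {n : ℕ} {f g : Matrix (Fin m) (Fin m) D → Matrix (Fin m) (Fin m) D}

private lemma base_eq
    (h : ∀ X : (Matrix (Fin m) (Fin m) D)ˣ, f X.val + X.val ^ n * g (X⁻¹).val = 0)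
    {α : D} (hα : α ≠ 0) :
    f (α • 1) + α ^ n • g (α⁻¹ • 1) = 0 := by
  have hU : f (α • 1) + (α • (1 : Matrix (Fin m) (Fin m) D)) ^ n * g (α⁻¹ • 1) = 0 :=
    h ⟨α • 1, α⁻¹ • 1,
      by rw [smul_one_mul', smul_smul, mul_inv_cancel₀ hα, one_smul],
      by rw [smul_one_mul', smul_smul, inv_mul_cancel₀ hα, one_smul]⟩
  rwa [smul_one_pow', smul_one_mul'] at hU

private lemma symm_h
    (h : ∀ X : (Matrix (Fin m) (Fin m) D)ˣ, f X.val + X.val ^ n * g (X⁻¹).val = 0) :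
    ∀ X : (Matrix (Fin m) (Fin m) D)ˣ, g X.val + X.val ^ n * f (X⁻¹).val = 0 := by
  intro X
  have h1 := h X⁻¹
  rw [inv_inv] at h1
  have h2 := congrArg (fun M => X.val ^ n * M) h1
  simp only [mul_add, mul_zero, ← mul_assoc] at h2
  have h3 : X.val ^ n * (X⁻¹).val ^ n = 1 := by
    have := Units.mul_inv (X ^ n)
    rwa [← inv_pow, Units.val_pow_eq_pow_val, Units.val_pow_eq_pow_val] at this
  rw [h3, one_mul] at h2
  rw [add_comm]
  exact h2

end Part5

section Part6

variable {n : ℕ} {f g : Matrix (Fin m) (Fin m) D → Matrix (Fin m) (Fin m) D}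

private lemma star_eq (hn : 3 ≤ n)
    (hf : ∀ X Y : Matrix (Fin m) (Fin m) D, f (X + Y) = f X + f Y)
    (hg : ∀ X Y : Matrix (Fin m) (Fin m) D, g (X + Y) = g X + g Y)
    (h : ∀ X : (Matrix (Fin m) (Fin m) D)ˣ, f X.val + X.val ^ n * g (X⁻¹).val = 0)
    {i j : Fin m} (hij : i ≠ j) {κ : D} (hκ : κ ≠ 0) (hc : ∀ x : D, κ * x = x * κ)
    (hginv : ∀ x : Matrix (Fin m) (Fin m) D, g (κ⁻¹ • x) = κ⁻¹ • g x) (t : D) :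
    f (single i j t)
      - (κ ^ n * (κ⁻¹ * κ⁻¹)) • g (single i j t)
      + ((n : D) * κ ^ (n-1) * κ⁻¹) • (single i j t * g 1)
      - ((n : D) * κ ^ (n-1) * (κ⁻¹ * κ⁻¹)) •
          (single i j t * g (single i j t)) = 0 := by
  have hgneg : ∀ x, g (-x) = - g x := fun x => (AddMonoidHom.mk' g hg).map_neg x
  have hc' : ∀ x : D, κ⁻¹ * x = x * κ⁻¹ :=
    fun x => (Commute.inv_left₀ (show Commute κ x from hc x)).eq
  have hsc : κ⁻¹ * (κ⁻¹ * (-t)) = -(κ⁻¹ * t * κ⁻¹) := by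
    rw [mul_neg, mul_neg, hc' (κ⁻¹ * t)]
  have hstd : single i j (-(κ⁻¹ * t * κ⁻¹))
      = κ⁻¹ • κ⁻¹ • single i j (-t) := by
    rw [smul_single, smul_single, smul_eq_mul, smul_eq_mul, hsc]
  have hbase := base_eq h hκ
  rw [hginv] at hbase
  have hbase' : f (κ • 1) = -(κ ^ n • κ⁻¹ • g 1) := eq_neg_of_add_eq_zero_left hbase
  have hX : f (κ • (1 : Matrix (Fin m) (Fin m) D) + single i j t)
      + (κ • (1 : Matrix (Fin m) (Fin m) D) + single i j t) ^ n *
        g (κ⁻¹ • 1 + single i j (-(κ⁻¹ * t * κ⁻¹))) = 0 := h (mkUnit hij hκ t)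
  rw [hf, pow_central hij hc t (by omega : 1 ≤ n), hstd, hg, std_neg] at hX
  simp only [hginv] at hX
  rw [hgneg, hbase'] at hX
  have hc'' : ∀ x : D, (κ⁻¹ * κ⁻¹) * x = x * (κ⁻¹ * κ⁻¹) := fun x => by
    rw [mul_assoc, hc', hc' x, mul_assoc]
  simp only [add_mul, mul_add, smul_one_mul', Matrix.smul_mul, mul_smul_central hc',
    mul_smul_central hc'', one_mul, smul_neg, mul_neg, smul_add, neg_add, smul_smul] at hX
  rw [hc' (κ ^ n), hc' ((n : D) * κ ^ (n-1)), hc'' (κ ^ n), hc'' ((n : D) * κ ^ (n-1))] at hX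
  rw [← hX]
  abel

end Part6

section Part7

variable {n : ℕ} {f g : Matrix (Fin m) (Fin m) D → Matrix (Fin m) (Fin m) D}

private lemma offdiag (hn : 3 ≤ n) (hchar : ringChar D = 0 ∨ n < ringChar D)
    (hf : ∀ X Y : Matrix (Fin m) (Fin m) D, f (X + Y) = f X + f Y)
    (hg : ∀ X Y : Matrix (Fin m) (Fin m) D, g (X + Y) = g X + g Y)
    (h : ∀ X : (Matrix (Fin m) (Fin m) D)ˣ, f X.val + X.val ^ n * g (X⁻¹).val = 0)
    {i j : Fin m} (hij : i ≠ j) (t : D) : f (single i j t) = 0 := by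
  obtain ⟨k, hk0, hk1⟩ := exists_good_k hn hchar
  have hfneg : ∀ x, f (-x) = - f x := fun x => (AddMonoidHom.mk' f hf).map_neg x
  have hgneg : ∀ x, g (-x) = - g x := fun x => (AddMonoidHom.mk' g hg).map_neg x
  have htriv : ∀ x : Matrix (Fin m) (Fin m) D, g ((1:D)⁻¹ • x) = (1:D)⁻¹ • g x := by
    intro x; rw [inv_one, one_smul, one_smul]
  have hcent1 : ∀ x : D, (1:D) * x = x * (1:D) := fun x => by rw [one_mul, mul_one]
  have E1 := star_eq hn hf hg h hij one_ne_zero hcent1 htriv t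
  have E2 := star_eq hn hf hg h hij one_ne_zero hcent1 htriv (-t)
  simp only [one_pow, inv_one, mul_one, one_mul, one_smul] at E1 E2
  rw [std_neg] at E2
  rw [hfneg, hgneg] at E2
  simp only [neg_mul, mul_neg, neg_neg, smul_neg, sub_neg_eq_add] at E2
  -- E2 : -f T + g T + -((n:D) • (T * g 1)) - (n:D) • (T * g T) = 0  (roughly)
  have hnne : ((n : ℕ) : D) ≠ 0 := cast_ne_zero_of_char hchar (by omega) le_rfl
  have h2ne : ((2 : ℕ) : D) ≠ 0 := cast_ne_zero_of_char hchar (by omega) (by omega)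
  have hsum : (f (single i j t) - g (single i j t)
      + (n : D) • (single i j t * g 1)
      - (n : D) • (single i j t * g (single i j t)))
      + (-f (single i j t) + g (single i j t)
      + -((n : D) • (single i j t * g 1))
      - (n : D) • (single i j t * g (single i j t))) = 0 := by
    rw [E1, E2, add_zero]
  have hzz : ((2 : ℕ) : D) • ((n : D) • (single i j t * g (single i j t)))
      = 0 := by
    rw [Nat.cast_smul_eq_nsmul, two_smul, ← neg_eq_zero, ← hsum]
    abel
  have hz : single i j t * g (single i j t) = 0 :=
    smul_cancel' hnne (smul_cancel' h2ne hzz)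
  rw [hz, smul_zero, sub_zero] at E1
  -- now the κ = k instance
  have hck : ∀ x : D, ((k : ℕ) : D) * x = x * ((k : ℕ) : D) := fun x =>
    (Nat.cast_commute k x).eq
  have hginvk : ∀ x : Matrix (Fin m) (Fin m) D,
      g (((k : ℕ) : D)⁻¹ • x) = ((k : ℕ) : D)⁻¹ • g x :=
    fun x => map_natCast_inv_smul (AddMonoidHom.mk' g hg) hk0 x
  have E3 := star_eq hn hf hg h hij hk0 hck hginvk t
  rw [hz, smul_zero, sub_zero] at E3
  have ea2 : ((k : ℕ) : D) ^ n * (((k : ℕ) : D)⁻¹ * ((k : ℕ) : D)⁻¹)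
      = ((k : ℕ) : D) ^ (n - 2) := by
    rw [← _root_.mul_inv_rev, ← pow_two, ← pow_sub₀ _ hk0 (by omega : 2 ≤ n)]
  have ea3' : ((k : ℕ) : D) ^ (n - 1) * ((k : ℕ) : D)⁻¹ = ((k : ℕ) : D) ^ (n - 2) := by
    have h9 := pow_sub₀ ((k : ℕ) : D) hk0 (show 1 ≤ n - 1 by omega)
    rw [pow_one] at h9
    rw [show n - 1 - 1 = n - 2 from by omega] at h9
    exact h9.symm
  have ea3 : ((n : ℕ) : D) * ((k : ℕ) : D) ^ (n - 1) * ((k : ℕ) : D)⁻¹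
      = ((n : ℕ) : D) * ((k : ℕ) : D) ^ (n - 2) := by
    rw [mul_assoc, ea3']
  rw [ea2, ea3] at E3
  -- express g T from E1
  have hgT : g (single i j t) = f (single i j t)
      + (n : D) • (single i j t * g 1) := by
    rw [sub_add_eq_add_sub, sub_eq_zero] at E1
    exact E1.symm
  rw [hgT, smul_add, smul_smul,
    ← (Nat.cast_commute (n : ℕ) (((k : ℕ) : D) ^ (n - 2))).eq] at E3
  have hfin : f (single i j t)
      - ((k : ℕ) : D) ^ (n - 2) • f (single i j t) = 0 := by
    rw [← E3]
    abel
  have hfin' : ((1 : D) - ((k : ℕ) : D) ^ (n - 2)) • f (single i j t) = 0 := by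
    rw [sub_smul, one_smul]
    exact hfin
  exact smul_cancel' (sub_ne_zero_of_ne (Ne.symm hk1)) hfin'

end Part7

end Helpers

/-- Step 0 in the proof of Theorem T2: `f(αI) = 0 = g(αI)` for all `α ∈ D`. -/
theorem stmt_10 (n m : ℕ) (hn : 3 ≤ n) (hm : 2 ≤ m) (D : Type*) [DivisionRing D]
    (hchar : ringChar D = 0 ∨ n < ringChar D)
    (f g : Matrix (Fin m) (Fin m) D → Matrix (Fin m) (Fin m) D)
    (hf : ∀ X Y, f (X + Y) = f X + f Y)
    (hg : ∀ X Y, g (X + Y) = g X + g Y)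
    (h : ∀ X : (Matrix (Fin m) (Fin m) D)ˣ,
      f (Units.val X) + (Units.val X) ^ n * g (Units.val X⁻¹) = 0) :
    ∀ α : D, f (α • (1 : Matrix (Fin m) (Fin m) D)) = 0 ∧
      g (α • (1 : Matrix (Fin m) (Fin m) D)) = 0 := by
  have hfstd : ∀ (i j : Fin m), i ≠ j → ∀ t : D, f (Matrix.single i j t) = 0 :=
    fun i j hij t => offdiag hn hchar hf hg h hij t
  have hgstd : ∀ (i j : Fin m), i ≠ j → ∀ t : D, g (Matrix.single i j t) = 0 :=
    fun i j hij t => offdiag hn hchar hg hf (symm_h h) hij t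
  have hnne : ((n : ℕ) : D) ≠ 0 := cast_ne_zero_of_char hchar (by omega) le_rfl
  have key : ∀ γ : D, γ ≠ 0 → g (γ⁻¹ • (1 : Matrix (Fin m) (Fin m) D)) = 0 := by
    intro γ hγ
    apply eq_zero_of_std_mul hm
    intro i j hij
    have hX : f (γ • (1 : Matrix (Fin m) (Fin m) D) + Matrix.single i j γ)
        + (γ • (1 : Matrix (Fin m) (Fin m) D) + Matrix.single i j γ) ^ n *
          g (γ⁻¹ • 1 + Matrix.single i j (-(γ⁻¹ * γ * γ⁻¹))) = 0 :=
      h (mkUnit hij hγ γ)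
    rw [show γ⁻¹ * γ * γ⁻¹ = γ⁻¹ from by rw [inv_mul_cancel₀ hγ, one_mul]] at hX
    rw [hf, hfstd i j hij γ, add_zero, hg, hgstd i j hij (-γ⁻¹), add_zero,
      pow_diag hij γ n, add_mul, smul_one_mul', Matrix.smul_mul] at hX
    have hb := base_eq h hγ
    have hrest : (((n : ℕ) : D) * γ ^ n) •
        (Matrix.single i j (1 : D) * g (γ⁻¹ • 1)) = 0 := by
      have h9 : (((n : ℕ) : D) * γ ^ n) •
            (Matrix.single i j (1 : D) * g (γ⁻¹ • 1))
          = (f (γ • 1) + (γ ^ n • g (γ⁻¹ • 1)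
              + (((n : ℕ) : D) * γ ^ n) •
                (Matrix.single i j (1 : D) * g (γ⁻¹ • 1))))
            - (f (γ • 1) + γ ^ n • g (γ⁻¹ • 1)) := by abel
      rw [h9, hX, hb, sub_zero]
    have hne : ((n : ℕ) : D) * γ ^ n ≠ 0 := mul_ne_zero hnne (pow_ne_zero _ hγ)
    exact smul_cancel' hne hrest
  intro α
  by_cases hα : α = 0
  · subst hα
    rw [zero_smul]
    have hf0 : f 0 = 0 := by
      have := hf 0 0
      rw [add_zero] at this
      exact (left_eq_add.mp this)
    have hg0 : g 0 = 0 := by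
      have := hg 0 0
      rw [add_zero] at this
      exact (left_eq_add.mp this)
    exact ⟨hf0, hg0⟩
  · constructor
    · have hb := base_eq h hα
      rw [key α hα, smul_zero, add_zero] at hb
      exact hb
    · have := key α⁻¹ (inv_ne_zero hα)
      rwa [inv_inv] at this
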